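/- For every τ > 0 and x ∈ ℝ, v is twice differentiable in x at (τ,x) and ∂²_x v(τ,x) = e^x · N(x/√τ + √τ/2) + e^x · n(x/√τ + √τ/2)/√τ; equivalently, ∂²_x v(τ,x) = ∂_x v(τ,x) + 2 ∂_τ v(τ,x), i.e. the ratio relation ∂²_x v/∂_τ v = 2 + ∂_x v/∂_τ v holds. -/

import Mathlib

/-!
With `d₁ = x/√τ + √τ/2` and `d₂ = d₁ - √τ`, the identity `eˣ n(d₁) = n(d₂)` makes the two
density terms cancel in `∂ₓv`, leaving `∂ₓv = eˣ N(d₁)`; differentiating once more gives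
`∂²ₓv = eˣ N(d₁) + eˣ n(d₁)/√τ`. In `∂_τ v` the same identity reduces everything to
`n(d₂) ∂_τ(d₁ - d₂) = eˣ n(d₁)/(2√τ)`, which is half of the second summand of `∂²ₓv`.
-/

open MeasureTheory

/-- Standard normal cumulative distribution function. -/
noncomputable def stdN (y : ℝ) : ℝ :=
  ∫ u in Set.Iio y, Real.exp (-u ^ 2 / 2) / Real.sqrt (2 * Real.pi)

/-- Standard normal density. -/
noncomputable def stdn (y : ℝ) : ℝ :=
  Real.exp (-y ^ 2 / 2) / Real.sqrt (2 * Real.pi)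

/-- Unit-volatility Black–Scholes price in reduced variables. -/
noncomputable def bsv (τ x : ℝ) : ℝ :=
  Real.exp x * stdN (x / Real.sqrt τ + Real.sqrt τ / 2) -
    stdN (x / Real.sqrt τ - Real.sqrt τ / 2)

theorem hasDerivAt_integral_Iio {E : Type*} [NormedAddCommGroup E] [NormedSpace ℝ E]
    [CompleteSpace E] {f : ℝ → E} (hf : Integrable f) (hfc : Continuous f) (y : ℝ) :
    HasDerivAt (fun z => ∫ u in Set.Iio z, f u) (f y) y := by
  have hsplit : ∀ z, ∫ u in Set.Iio z, f u = (∫ u in Set.Iic 0, f u) + ∫ u in (0 : ℝ)..z, f u := by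
    intro z
    rw [← integral_Iic_eq_integral_Iio,
      ← intervalIntegral.integral_Iic_sub_Iic hf.integrableOn hf.integrableOn]
    abel
  simp only [hsplit]
  exact (intervalIntegral.integral_hasDerivAt_right hf.intervalIntegrable
    hfc.aestronglyMeasurable.stronglyMeasurableAtFilter hfc.continuousAt).const_add _

theorem hasDerivAt_stdN (y : ℝ) : HasDerivAt stdN (stdn y) y := by
  have hint : Integrable stdn := by
    have h := (integrable_exp_neg_mul_sq (b := 1 / 2) (by norm_num)).div_const √(2 * Real.pi)
    convert h using 2 with u
    unfold stdn
    ring_nf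
  exact hasDerivAt_integral_Iio hint (by unfold stdn; fun_prop) y

noncomputable def bsd₁ (τ x : ℝ) : ℝ := x / √τ + √τ / 2

noncomputable def bsd₂ (τ x : ℝ) : ℝ := x / √τ - √τ / 2

theorem exp_mul_stdn_bsd₁ {τ : ℝ} (hτ : 0 < τ) (x : ℝ) :
    Real.exp x * stdn (bsd₁ τ x) = stdn (bsd₂ τ x) := by
  have hsq : (bsd₁ τ x) ^ 2 = (bsd₂ τ x) ^ 2 + 2 * x := by
    have : √τ ≠ 0 := by positivity
    unfold bsd₁ bsd₂
    field_simp
    ring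
  unfold stdn
  rw [mul_div_assoc', ← Real.exp_add, hsq]
  ring_nf

theorem hasDerivAt_bsd₁_right (τ x : ℝ) : HasDerivAt (bsd₁ τ) (1 / √τ) x :=
  ((hasDerivAt_id' x).div_const √τ).add_const (√τ / 2)

theorem hasDerivAt_bsd₂_right (τ x : ℝ) : HasDerivAt (bsd₂ τ) (1 / √τ) x :=
  ((hasDerivAt_id' x).div_const √τ).sub_const (√τ / 2)

theorem hasDerivAt_bsv_right {τ : ℝ} (hτ : 0 < τ) (x : ℝ) :
    HasDerivAt (bsv τ) (Real.exp x * stdN (bsd₁ τ x)) x := by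
  have H := ((Real.hasDerivAt_exp x).mul
    ((hasDerivAt_stdN _).comp x (hasDerivAt_bsd₁_right τ x))).sub
      ((hasDerivAt_stdN _).comp x (hasDerivAt_bsd₂_right τ x))
  refine H.congr_deriv ?_
  rw [Function.comp_apply, ← exp_mul_stdn_bsd₁ hτ]
  ring

theorem deriv_bsv_right {τ : ℝ} (hτ : 0 < τ) :
    deriv (bsv τ) = fun x => Real.exp x * stdN (bsd₁ τ x) :=
  funext fun x => (hasDerivAt_bsv_right hτ x).deriv

theorem hasDerivAt_deriv_bsv_right {τ : ℝ} (hτ : 0 < τ) (x : ℝ) :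
    HasDerivAt (deriv (bsv τ))
      (Real.exp x * stdN (bsd₁ τ x) + Real.exp x * stdn (bsd₁ τ x) / √τ) x := by
  have H := (Real.hasDerivAt_exp x).mul ((hasDerivAt_stdN _).comp x (hasDerivAt_bsd₁_right τ x))
  rw [deriv_bsv_right hτ]
  exact H.congr_deriv (by rw [Function.comp_apply]; ring)

theorem hasDerivAt_bsv_left {τ : ℝ} (hτ : 0 < τ) (x : ℝ) :
    HasDerivAt (fun t => bsv t x) (Real.exp x * stdn (bsd₁ τ x) / (2 * √τ)) τ := by
  have hsqrt : HasDerivAt Real.sqrt (1 / (2 * √τ)) τ := Real.hasDerivAt_sqrt hτ.ne'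
  -- the `τ`-derivative of `d₁` cancels, so it is never computed
  have hd₁ : HasDerivAt (fun t => bsd₁ t x) (deriv (fun t => bsd₁ t x) τ) τ := by
    have hτ₀ := hτ.ne'
    have hsqrt₀ : √τ ≠ 0 := by positivity
    unfold bsd₁
    exact DifferentiableAt.hasDerivAt (by fun_prop (disch := assumption))
  have hd₂ : HasDerivAt (fun t => bsd₂ t x) (deriv (fun t => bsd₁ t x) τ - 1 / (2 * √τ)) τ := by
    have hsub : (fun t => bsd₂ t x) = fun t => bsd₁ t x - √t := by
      funext t
      unfold bsd₁ bsd₂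
      ring
    rw [hsub]
    exact hd₁.sub hsqrt
  have H := (((hasDerivAt_stdN _).comp τ hd₁).const_mul (Real.exp x)).sub
    ((hasDerivAt_stdN _).comp τ hd₂)
  refine H.congr_deriv ?_
  rw [← mul_assoc, exp_mul_stdn_bsd₁ hτ]
  ring

/-- Black–Scholes gamma in reduced variables:
`∂²_x v(τ,x) = e^x N(d₁) + e^x n(d₁)/√τ = ∂_x v(τ,x) + 2 ∂_τ v(τ,x)`. -/
theorem bsv_second_deriv_x (τ x : ℝ) (hτ : 0 < τ) :
    ∃ vτ vx : ℝ,
      HasDerivAt (fun t => bsv t x) vτ τ ∧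
      HasDerivAt (fun y => bsv τ y) vx x ∧
      HasDerivAt (fun y => deriv (fun z => bsv τ z) y)
        (Real.exp x * stdN (x / Real.sqrt τ + Real.sqrt τ / 2) +
          Real.exp x * stdn (x / Real.sqrt τ + Real.sqrt τ / 2) / Real.sqrt τ) x ∧
      Real.exp x * stdN (x / Real.sqrt τ + Real.sqrt τ / 2) +
          Real.exp x * stdn (x / Real.sqrt τ + Real.sqrt τ / 2) / Real.sqrt τ
        = vx + 2 * vτ := by
  refine ⟨_, _, hasDerivAt_bsv_left hτ x, hasDerivAt_bsv_right hτ x,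
    hasDerivAt_deriv_bsv_right hτ x, ?_⟩
  have : √τ ≠ 0 := by positivity
  unfold bsd₁
  field_simp
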